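/- arXiv:1809.00179 — 2 statements merged into one kernel-verified Lean document; each statement's English description precedes it below -/
import Mathlib

section
/- Let D be a downwards closed dependency, χ(S) a first-order formula where S is a relation symbol that occurs only positively in χ, and let χ'(W₁,…,Wₙ) be obtained from χ by replacing each occurrence of S with a distinct new relation symbol Wᵢ of the same arity. Then for all suitable structures M and assignments s, the following are equivalent: (1) there exists a relation S such that ⟨M,S⟩ ∈ D and M ⊨_s χ(S); (2) there exist relations W₁,…,Wₙ such that ⟨M, ⋃ᵢ Wᵢ⟩ ∈ D and M ⊨_s χ'(W₁,…,Wₙ). -/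
/-! # A framework for lax team semantics (Galliani-style)

Signatures, structures, terms, NNF formulas of `FO(𝒟)` with dependency atoms,
lax team semantics, Tarskian semantics for first-order formulas, and the
notions of dependency used in the paper. -/

/-- A first-order signature: function and relation symbols of each arity. -/
structure Sig : Type 1 where
  Func : ℕ → Type
  Rel : ℕ → Type

/-- A structure for the signature `σ` with domain `M`. -/
structure Struc (σ : Sig) (M : Type) : Type where
  fn : ∀ n, σ.Func n → (Fin n → M) → M
  rel : ∀ n, σ.Rel n → (Fin n → M) → Prop

/-- Terms over `σ`, with variables indexed by `ℕ`. -/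
inductive Tm (σ : Sig) : Type where
  | var : ℕ → Tm σ
  | app : ∀ n, σ.Func n → (Fin n → Tm σ) → Tm σ

def Tm.eval {σ : Sig} {M : Type} (𝔐 : Struc σ M) (s : ℕ → M) : Tm σ → M
  | .var v => s v
  | .app n f ts => 𝔐.fn n f fun i => (ts i).eval 𝔐 s

def Tm.vars {σ : Sig} : Tm σ → Set ℕ
  | .var v => {v}
  | .app _ _ ts => ⋃ i, (ts i).vars

/-- A `k`-ary dependency notion: a class of `k`-ary relations over every domain. -/
def DepOn (k : ℕ) : Type 1 :=
  ∀ M : Type, Set (Fin k → M) → Prop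

/-- Closure under isomorphisms (part of the definition of a dependency). -/
def DepOn.IsoClosed {k : ℕ} (D : DepOn k) : Prop :=
  ∀ (M N : Type) (e : M ≃ N) (R : Set (Fin k → M)),
    D M R → D N ((fun xs => (⇑e) ∘ xs) '' R)

/-- Downwards closure. -/
def DepOn.DownClosed {k : ℕ} (D : DepOn k) : Prop :=
  ∀ (M : Type) (R Q : Set (Fin k → M)), D M R → Q ⊆ R → D M Q

/-- Union closure. -/
def DepOn.UnionClosed {k : ℕ} (D : DepOn k) : Prop :=
  ∀ (M : Type) (I : Type) (Rf : I → Set (Fin k → M)),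
    (∀ j, D M (Rf j)) → D M (⋃ j, Rf j)

/-- The empty team property. -/
def DepOn.EmptyTeamProp {k : ℕ} (D : DepOn k) : Prop :=
  ∀ M : Type, D M (∅ : Set (Fin k → M))

/-- Closed-world dependencies: only the elements occurring in tuples of `R` matter. -/
def DepOn.ClosedWorld {k : ℕ} (D : DepOn k) : Prop :=
  ∀ (M : Type) (R : Set (Fin k → M)),
    D M R ↔ D {m : M // ∃ xs ∈ R, ∃ i, xs i = m} {xs | (fun i => (xs i : M)) ∈ R}

/-- Negation normal form formulas of `FO(𝒟)`: first-order literals, dependency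
atoms indexed by `ι` (with arities `ar`), conjunction, disjunction, quantifiers. -/
inductive Fml (σ : Sig) (ι : Type) (ar : ι → ℕ) : Type where
  | eq : Tm σ → Tm σ → Fml σ ι ar
  | neq : Tm σ → Tm σ → Fml σ ι ar
  | rel : ∀ n, σ.Rel n → (Fin n → Tm σ) → Fml σ ι ar
  | nrel : ∀ n, σ.Rel n → (Fin n → Tm σ) → Fml σ ι ar
  | dep : ∀ i : ι, (Fin (ar i) → Tm σ) → Fml σ ι ar
  | and : Fml σ ι ar → Fml σ ι ar → Fml σ ι ar
  | or : Fml σ ι ar → Fml σ ι ar → Fml σ ι ar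
  | ex : ℕ → Fml σ ι ar → Fml σ ι ar
  | all : ℕ → Fml σ ι ar → Fml σ ι ar

namespace Fml
variable {σ : Sig} {ι : Type} {ar : ι → ℕ}

/-- Free variables of a formula. -/
def free : Fml σ ι ar → Set ℕ
  | .eq t u => t.vars ∪ u.vars
  | .neq t u => t.vars ∪ u.vars
  | .rel _ _ ts => ⋃ i, (ts i).vars
  | .nrel _ _ ts => ⋃ i, (ts i).vars
  | .dep _ ts => ⋃ i, (ts i).vars
  | .and φ ψ => φ.free ∪ ψ.free
  | .or φ ψ => φ.free ∪ ψ.free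
  | .ex v φ => φ.free \ {v}
  | .all v φ => φ.free \ {v}

/-- The relation symbols occurring in negated literals of a formula. -/
def negRels : Fml σ ι ar → Set (Σ n, σ.Rel n)
  | .eq _ _ => ∅
  | .neq _ _ => ∅
  | .rel _ _ _ => ∅
  | .nrel n R _ => {⟨n, R⟩}
  | .dep _ _ => ∅
  | .and φ ψ => φ.negRels ∪ ψ.negRels
  | .or φ ψ => φ.negRels ∪ ψ.negRels
  | .ex _ φ => φ.negRels
  | .all _ φ => φ.negRels

open Classical in
/-- The number of occurrences (positive or negative) of a relation symbol. -/
noncomputable def countRel (S : Σ n, σ.Rel n) : Fml σ ι ar → ℕ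
  | .eq _ _ => 0
  | .neq _ _ => 0
  | .rel n R _ => if (⟨n, R⟩ : Σ n, σ.Rel n) = S then 1 else 0
  | .nrel n R _ => if (⟨n, R⟩ : Σ n, σ.Rel n) = S then 1 else 0
  | .dep _ _ => 0
  | .and φ ψ => countRel S φ + countRel S ψ
  | .or φ ψ => countRel S φ + countRel S ψ
  | .ex _ φ => countRel S φ
  | .all _ φ => countRel S φ

/-- Quantifier-free formulas. -/
def QFree : Fml σ ι ar → Prop
  | .and φ ψ => QFree φ ∧ QFree ψ
  | .or φ ψ => QFree φ ∧ QFree ψ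
  | .ex _ _ => False
  | .all _ _ => False
  | _ => True

end Fml

/-- A team: a set of assignments. -/
abbrev Team (M : Type) := Set (ℕ → M)

/-- Lax supplementation `X[H/v]`. -/
def teamSupp {M : Type} (X : Team M) (H : (ℕ → M) → Set M) (v : ℕ) : Team M :=
  {s' | ∃ s ∈ X, ∃ m ∈ H s, s' = Function.update s v m}

/-- Duplication `X[M/v]`. -/
def teamDup {M : Type} (X : Team M) (v : ℕ) : Team M :=
  teamSupp X (fun _ => Set.univ) v

/-- Simultaneous update of an assignment on a tuple of variables. -/
def updVec {M : Type} (s : ℕ → M) {l : ℕ} (vs : Fin l → ℕ) (m : Fin l → M) : ℕ → M :=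
  (List.finRange l).foldr (fun j t => Function.update t (vs j) (m j)) s

/-- Lax supplementation along a tuple of variables. -/
def teamSuppVec {M : Type} (X : Team M) {l : ℕ} (H : (ℕ → M) → Set (Fin l → M))
    (vs : Fin l → ℕ) : Team M :=
  {s' | ∃ s ∈ X, ∃ m ∈ H s, s' = updVec s vs m}

/-- Restriction `X↾V` of a team to a set of variables. -/
def teamRestrict {M : Type} (X : Team M) (V : Set ℕ) : Set (V → M) :=
  (fun s (v : V) => s v.1) '' X

/-- `X(t)`: the relation of the values of the tuple of terms `t` in the team `X`. -/
def teamVals {σ : Sig} {M : Type} (𝔐 : Struc σ M) (X : Team M) {k : ℕ}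
    (t : Fin k → Tm σ) : Set (Fin k → M) :=
  {xs | ∃ s ∈ X, xs = fun i => (t i).eval 𝔐 s}

/-- `X↾(v = w)(v)`: the relation encoded in `X` by the pair of variable tuples `v`, `w`. -/
def pairRel {M : Type} (Y : Team M) {k : ℕ} (v w : Fin k → ℕ) : Set (Fin k → M) :=
  {xs | ∃ s ∈ Y, (∀ j, xs j = s (v j)) ∧ ∀ j, s (v j) = s (w j)}

/-- Lax team semantics for `FO(𝒟)`. -/
def Fml.TSat {σ : Sig} {ι : Type} {ar : ι → ℕ} (𝒟 : ∀ i, DepOn (ar i)) {M : Type}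
    (𝔐 : Struc σ M) : Fml σ ι ar → Team M → Prop
  | .eq t u, X => ∀ s ∈ X, t.eval 𝔐 s = u.eval 𝔐 s
  | .neq t u, X => ∀ s ∈ X, t.eval 𝔐 s ≠ u.eval 𝔐 s
  | .rel n R ts, X => ∀ s ∈ X, 𝔐.rel n R fun i => (ts i).eval 𝔐 s
  | .nrel n R ts, X => ∀ s ∈ X, ¬ 𝔐.rel n R fun i => (ts i).eval 𝔐 s
  | .dep i ts, X => 𝒟 i M (teamVals 𝔐 X ts)
  | .and φ ψ, X => Fml.TSat 𝒟 𝔐 φ X ∧ Fml.TSat 𝒟 𝔐 ψ X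
  | .or φ ψ, X => ∃ Y Z : Team M, X = Y ∪ Z ∧ Fml.TSat 𝒟 𝔐 φ Y ∧ Fml.TSat 𝒟 𝔐 ψ Z
  | .ex v φ, X => ∃ H : (ℕ → M) → Set M, (∀ s ∈ X, (H s).Nonempty) ∧
      Fml.TSat 𝒟 𝔐 φ (teamSupp X H v)
  | .all v φ, X => Fml.TSat 𝒟 𝔐 φ (teamDup X v)

/-- The arity function of the empty dependency family. -/
abbrev noDep : Empty → ℕ := fun i => i.elim

/-- Pure first-order formulas: no dependency atoms. -/
abbrev FOFml (σ : Sig) := Fml σ Empty noDep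

/-- The empty dependency family. -/
def noDepFam : ∀ i : Empty, DepOn (noDep i) := fun i => i.elim

/-- Tarskian satisfaction for first-order formulas. -/
def FOSat {σ : Sig} {M : Type} (𝔐 : Struc σ M) : (ℕ → M) → FOFml σ → Prop
  | s, .eq t u => t.eval 𝔐 s = u.eval 𝔐 s
  | s, .neq t u => t.eval 𝔐 s ≠ u.eval 𝔐 s
  | s, .rel n R ts => 𝔐.rel n R fun i => (ts i).eval 𝔐 s
  | s, .nrel n R ts => ¬ 𝔐.rel n R fun i => (ts i).eval 𝔐 s
  | _, .dep i _ => i.elim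
  | s, .and φ ψ => FOSat 𝔐 s φ ∧ FOSat 𝔐 s ψ
  | s, .or φ ψ => FOSat 𝔐 s φ ∨ FOSat 𝔐 s ψ
  | s, .ex v φ => ∃ m : M, FOSat 𝔐 (Function.update s v m) φ
  | s, .all v φ => ∀ m : M, FOSat 𝔐 (Function.update s v m) φ

/-- Truth of a sentence of `FO(𝒟)` in a model, via the singleton team. -/
def STrue {σ : Sig} {ι : Type} {ar : ι → ℕ} (𝒟 : ∀ i, DepOn (ar i)) {M : Type}
    (𝔐 : Struc σ M) (φ : Fml σ ι ar) : Prop :=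
  ∀ s : ℕ → M, Fml.TSat 𝒟 𝔐 φ {s}

/-- Tarskian truth of a first-order sentence. -/
def FOTrue {σ : Sig} {M : Type} (𝔐 : Struc σ M) (φ : FOFml σ) : Prop :=
  ∀ s : ℕ → M, FOSat 𝔐 s φ

open Classical in
/-- The structure `𝔐[Q/R]`: change the interpretation of `R` to `Q`. -/
noncomputable def Struc.updRel {σ : Sig} {M : Type} (𝔐 : Struc σ M) {k : ℕ} (R : σ.Rel k)
    (Q : Set (Fin k → M)) : Struc σ M where
  fn := 𝔐.fn
  rel := fun n S xs =>
    if h : (⟨n, S⟩ : Σ n, σ.Rel n) = ⟨k, R⟩ then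
      (fun i => xs (Fin.cast (congrArg Sigma.fst h).symm i)) ∈ Q
    else 𝔐.rel n S xs

/-- Extend a signature by `n` new relation symbols of arities `a`. -/
def Sig.addRels (σ : Sig) (n : ℕ) (a : Fin n → ℕ) : Sig where
  Func := σ.Func
  Rel := fun m => σ.Rel m ⊕ {i : Fin n // a i = m}

/-- Lift a term to an extended signature. -/
def Tm.liftR {σ : Sig} {n : ℕ} {a : Fin n → ℕ} : Tm σ → Tm (σ.addRels n a)
  | .var v => .var v
  | .app m f ts => .app m f fun i => (ts i).liftR

/-- Interpret the new relation symbols by the relations `Q`. -/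
def Struc.withRels {σ : Sig} {M : Type} (𝔐 : Struc σ M) {n : ℕ} {a : Fin n → ℕ}
    (Q : ∀ i, Set (Fin (a i) → M)) : Struc (σ.addRels n a) M where
  fn := 𝔐.fn
  rel := fun m S xs =>
    match S with
    | Sum.inl T => 𝔐.rel m T xs
    | Sum.inr i => (fun j => xs (Fin.cast i.2 j)) ∈ Q i.1

/-- The signature `{R}` with a single `k`-ary relation symbol. -/
def relSig (k : ℕ) : Sig where
  Func := fun _ => Empty
  Rel := fun n => PLift (n = k)

/-- The structure `⟨M, R⟩` over the signature `{R}`. -/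
def relStruc (k : ℕ) {M : Type} (R : Set (Fin k → M)) : Struc (relSig k) M where
  fn := fun _ f => f.elim
  rel := fun _ S xs => (fun i => xs (Fin.cast S.down.symm i)) ∈ R

/-- The empty signature. -/
def emptySig : Sig where
  Func := fun _ => Empty
  Rel := fun _ => Empty

/-- The unique structure over the empty signature with domain `M`. -/
def emptyStruc (M : Type) : Struc emptySig M where
  fn := fun _ f => f.elim
  rel := fun _ r => r.elim

/-- A dependency is first order if it is defined by a first-order sentence `φ(R)`. -/
def FirstOrderDep {k : ℕ} (D : DepOn k) : Prop :=
  ∃ φ : FOFml (relSig k), φ.free = ∅ ∧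
    ∀ (M : Type), Nonempty M → ∀ R : Set (Fin k → M), (D M R ↔ FOTrue (relStruc k R) φ)

/-- A family of dependencies is strongly first order if every sentence of `FO(𝒟)`
(over any signature) is equivalent to some first-order sentence. -/
def StronglyFO {ι : Type} {ar : ι → ℕ} (𝒟 : ∀ i, DepOn (ar i)) : Prop :=
  ∀ (σ : Sig) (φ : Fml σ ι ar), φ.free = ∅ →
    ∃ ψ : FOFml σ, ψ.free = ∅ ∧
      ∀ (M : Type) (𝔐 : Struc σ M), STrue 𝒟 𝔐 φ ↔ FOTrue 𝔐 ψ

/-- A single dependency is strongly first order. -/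
def DepOn.StronglyFO1 {k : ℕ} (D : DepOn k) : Prop :=
  StronglyFO (ι := Unit) (ar := fun _ => k) fun _ => D

/-- `D_max`: the relations satisfying `D` that are maximal among those satisfying `D`. -/
def Dmax {k : ℕ} (D : DepOn k) : DepOn k :=
  fun M R => D M R ∧ ¬ ∃ S : Set (Fin k → M), R ⊂ S ∧ D M S

/-- The constancy dependency. -/
def constDep : DepOn 1 := fun _ R => R.Subsingleton

/-- A dependency `D` is relativizable if each relativized atom `D^P` is definable
in `FO(D)`. -/
def DepOn.Relativizable {k : ℕ} (D : DepOn k) : Prop :=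
  ∀ (σ : Sig) (P : σ.Rel 1) (t : Fin k → Tm σ),
    ∃ φ : Fml σ Unit (fun _ => k),
      ∀ (M : Type) (𝔐 : Struc σ M) (X : Team M),
        Fml.TSat (fun _ => D) 𝔐 φ X ↔
          ((∀ s ∈ X, ∀ i, 𝔐.rel 1 P fun _ => (t i).eval 𝔐 s) ∧
            D {m : M // 𝔐.rel 1 P fun _ => m}
              {xs | ∃ s ∈ X, (fun i => (xs i : M)) = fun i => (t i).eval 𝔐 s})

/-- The union of two dependency families. -/
def sumFam {ιS ιD : Type} {arS : ιS → ℕ} {arD : ιD → ℕ}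
    (𝒮 : ∀ i, DepOn (arS i)) (𝒟 : ∀ i, DepOn (arD i)) :
    ∀ i : ιS ⊕ ιD, DepOn (Sum.elim arS arD i)
  | .inl i => 𝒮 i
  | .inr i => 𝒟 i

/-- The always-true formula. -/
def Fml.verum {σ : Sig} {ι : Type} {ar : ι → ℕ} : Fml σ ι ar := .eq (.var 0) (.var 0)

/-- The formula satisfied only by the empty team. -/
def Fml.falsum {σ : Sig} {ι : Type} {ar : ι → ℕ} : Fml σ ι ar := .neq (.var 0) (.var 0)

/-- Finite conjunction. -/
def bigAndL {σ : Sig} {ι : Type} {ar : ι → ℕ} (l : List (Fml σ ι ar)) : Fml σ ι ar :=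
  l.foldr Fml.and Fml.verum

/-- Finite disjunction. -/
def bigOrL {σ : Sig} {ι : Type} {ar : ι → ℕ} (l : List (Fml σ ι ar)) : Fml σ ι ar :=
  l.foldr Fml.or Fml.falsum

/-- Equality of two variables. -/
def veq {σ : Sig} {ι : Type} {ar : ι → ℕ} (a b : ℕ) : Fml σ ι ar := .eq (.var a) (.var b)

/-- Inequality of two variables. -/
def vne {σ : Sig} {ι : Type} {ar : ι → ℕ} (a b : ℕ) : Fml σ ι ar := .neq (.var a) (.var b)

/-- Universal quantification over a list of variables. -/
def alls {σ : Sig} {ι : Type} {ar : ι → ℕ} (vs : List ℕ) (φ : Fml σ ι ar) : Fml σ ι ar :=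
  vs.foldr Fml.all φ

/-- Existential quantification over a list of variables. -/
def exs {σ : Sig} {ι : Type} {ar : ι → ℕ} (vs : List ℕ) (φ : Fml σ ι ar) : Fml σ ι ar :=
  vs.foldr Fml.ex φ
/-- Replacement of a single occurrence of the dependency atom `dep i₀ t` by the
first-order atom `rel S t`. -/
inductive ReplOne {σ : Sig} {ι : Type} {ar : ι → ℕ} (i₀ : ι) (S : σ.Rel (ar i₀)) :
    Fml σ ι ar → Fml σ ι ar → Prop
  | atom (t : Fin (ar i₀) → Tm σ) : ReplOne i₀ S (.dep i₀ t) (.rel (ar i₀) S t)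
  | andL {φ φ' ψ} : ReplOne i₀ S φ φ' → ReplOne i₀ S (.and φ ψ) (.and φ' ψ)
  | andR {φ ψ ψ'} : ReplOne i₀ S ψ ψ' → ReplOne i₀ S (.and φ ψ) (.and φ ψ')
  | orL {φ φ' ψ} : ReplOne i₀ S φ φ' → ReplOne i₀ S (.or φ ψ) (.or φ' ψ)
  | orR {φ ψ ψ'} : ReplOne i₀ S ψ ψ' → ReplOne i₀ S (.or φ ψ) (.or φ ψ')
  | exC {v φ φ'} : ReplOne i₀ S φ φ' → ReplOne i₀ S (.ex v φ) (.ex v φ')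
  | allC {v φ φ'} : ReplOne i₀ S φ φ' → ReplOne i₀ S (.all v φ) (.all v φ')

/-- Replacement of every occurrence of the relation symbol `S` (which may only
occur positively) by one of the `n` new relation symbols of `σ.addRels n (fun _ => k)`. -/
inductive ReplEach {σ : Sig} {k n : ℕ} (S : σ.Rel k) :
    FOFml σ → FOFml (σ.addRels n fun _ => k) → Prop
  | eqC (t u : Tm σ) : ReplEach S (.eq t u) (.eq t.liftR u.liftR)
  | neqC (t u : Tm σ) : ReplEach S (.neq t u) (.neq t.liftR u.liftR)
  | relS (t : Fin k → Tm σ) (i : Fin n) :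
      ReplEach S (.rel k S t) (.rel k (Sum.inr ⟨i, rfl⟩) fun j => (t j).liftR)
  | relO {m : ℕ} (T : σ.Rel m) (t : Fin m → Tm σ)
      (h : (⟨m, T⟩ : Σ n, σ.Rel n) ≠ ⟨k, S⟩) :
      ReplEach S (.rel m T t) (.rel m (Sum.inl T) fun j => (t j).liftR)
  | nrelO {m : ℕ} (T : σ.Rel m) (t : Fin m → Tm σ)
      (h : (⟨m, T⟩ : Σ n, σ.Rel n) ≠ ⟨k, S⟩) :
      ReplEach S (.nrel m T t) (.nrel m (Sum.inl T) fun j => (t j).liftR)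
  | andC {φ φ' ψ ψ'} : ReplEach S φ φ' → ReplEach S ψ ψ' →
      ReplEach S (.and φ ψ) (.and φ' ψ')
  | orC {φ φ' ψ ψ'} : ReplEach S φ φ' → ReplEach S ψ ψ' →
      ReplEach S (.or φ ψ) (.or φ' ψ')
  | exC {v φ φ'} : ReplEach S φ φ' → ReplEach S (.ex v φ) (.ex v φ')
  | allC {v φ φ'} : ReplEach S φ φ' → ReplEach S (.all v φ) (.all v φ')

/-- Replacement of the unique (positive) occurrence `rel W t` of `W` by the formula
`v = w ∧ t = w`, for tuples `v`, `w` of new variables. -/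
inductive ReplW {σ : Sig} {ι : Type} {ar : ι → ℕ} {k : ℕ} (W : σ.Rel k) (v w : Fin k → ℕ) :
    Fml σ ι ar → Fml σ ι ar → Prop
  | atom (t : Fin k → Tm σ) :
      ReplW W v w (.rel k W t)
        (.and (bigAndL ((List.finRange k).map fun j => veq (v j) (w j)))
              (bigAndL ((List.finRange k).map fun j => Fml.eq (t j) (.var (w j)))))
  | andL {φ φ' ψ} : ReplW W v w φ φ' → ReplW W v w (.and φ ψ) (.and φ' ψ)
  | andR {φ ψ ψ'} : ReplW W v w ψ ψ' → ReplW W v w (.and φ ψ) (.and φ ψ')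
  | orL {φ φ' ψ} : ReplW W v w φ φ' → ReplW W v w (.or φ ψ) (.or φ' ψ)
  | orR {φ ψ ψ'} : ReplW W v w ψ ψ' → ReplW W v w (.or φ ψ) (.or φ ψ')

/-- The formula `D_∪(v₁ … vₙ; w₁ … wₙ)` of the paper: it asserts that the union of the
relations encoded by the pairs `(vᵢ, wᵢ)` satisfies the dependency `i₀`. -/
def depUnion {σ : Sig} {ι : Type} {ar : ι → ℕ} (i₀ : ι) (n : ℕ)
    (v w : Fin n → Fin (ar i₀) → ℕ) (p : Fin n → ℕ) (q : ℕ) (z₀ z₁ : Fin (ar i₀) → ℕ) :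
    Fml σ ι ar :=
  let k := ar i₀
  -- the guard `⋁ᵢ q = pᵢ` and its negation
  let guard : Fml σ ι ar := bigOrL ((List.finRange n).map fun i => veq q (p i))
  let nguard : Fml σ ι ar := bigAndL ((List.finRange n).map fun i => vne q (p i))
  -- the condition `⋀_{j<i} q ≠ pⱼ ∧ q = pᵢ` and its negation
  let cond : Fin n → Fml σ ι ar := fun i =>
    bigAndL ((((List.finRange n).filter fun j => j < i).map fun j => vne q (p j)) ++
      [veq q (p i)])
  let ncond : Fin n → Fml σ ι ar := fun i =>
    bigOrL ((((List.finRange n).filter fun j => j < i).map fun j => veq q (p j)) ++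
      [vne q (p i)])
  -- `z₀ z₁ = vᵢ wᵢ`
  let matchi : Fin n → Fml σ ι ar := fun i =>
    bigAndL (((List.finRange k).map fun t => veq (z₀ t) (v i t)) ++
      ((List.finRange k).map fun t => veq (z₁ t) (w i t)))
  -- `z₀ = z₁` and its negation
  let zeq : Fml σ ι ar := bigAndL ((List.finRange k).map fun t => veq (z₀ t) (z₁ t))
  let zne : Fml σ ι ar := bigOrL ((List.finRange k).map fun t => vne (z₀ t) (z₁ t))
  let body : Fml σ ι ar :=
    Fml.and
      (bigAndL ((List.finRange n).map fun i =>
        Fml.or (ncond i) (Fml.and (cond i) (matchi i))))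
      (Fml.or zne (Fml.and zeq (Fml.dep i₀ fun t => Tm.var (z₀ t))))
  alls ((List.finRange n).map p ++ [q])
    (exs ((List.finRange k).map z₀ ++ (List.finRange k).map z₁)
      (Fml.or nguard (Fml.and guard body)))

/-- The list of fresh variables used by `depUnion`. -/
def duFresh (n k : ℕ) (p : Fin n → ℕ) (q : ℕ) (z₀ z₁ : Fin k → ℕ) : List ℕ :=
  (List.finRange n).map p ++ [q] ++ (List.finRange k).map z₀ ++ (List.finRange k).map z₁

/-- The list of the variables in the tuples `v i`, `w i`. -/
def vwList (n k : ℕ) (v w : Fin n → Fin k → ℕ) : List ℕ :=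
  (List.finRange n).foldr
    (fun i acc => (List.finRange k).map (v i) ++ (List.finRange k).map (w i) ++ acc) []

/-- Apply a quantifier prefix (`true` = universal, `false` = existential) to a formula. -/
def applyPrefix {σ : Sig} {ι : Type} {ar : ι → ℕ} (pre : List (Bool × ℕ))
    (φ : Fml σ ι ar) : Fml σ ι ar :=
  pre.foldr (fun bv acc => match bv with
    | (true, x) => Fml.all x acc
    | (false, x) => Fml.ex x acc) φ

/-! Since `S` occurs only positively in `χ`, satisfaction of `χ` is monotone in the
interpretation of `S`; replacing the occurrences by `W₁ … Wₙ`, any interpretation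
`Q ⊇ ⋃ᵢ Wᵢ` of `S` satisfies `χ` whenever the `Wᵢ` satisfy `χ'`, and conversely
`Wᵢ := Q` satisfies `χ'` whenever `Q` satisfies `χ`. Downwards closure of `D` covers
`⋃ᵢ Q ⊆ Q` (the union is empty when `n = 0`). -/

section

variable {σ : Sig} {M : Type} {k n : ℕ}

@[simp]
lemma Tm.eval_liftR {a : Fin n → ℕ} (𝔐 : Struc σ M) (Q : ∀ i, Set (Fin (a i) → M))
    (s : ℕ → M) (t : Tm σ) :
    (t.liftR : Tm (σ.addRels n a)).eval (𝔐.withRels Q) s = t.eval 𝔐 s := by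
  induction t with
  | var v => rfl
  | app m f ts ih => exact congrArg (𝔐.fn m f) (funext ih)

@[simp]
lemma Tm.eval_updRel (𝔐 : Struc σ M) (S : σ.Rel k) (Q : Set (Fin k → M))
    (s : ℕ → M) (t : Tm σ) :
    t.eval (𝔐.updRel S Q) s = t.eval 𝔐 s := by
  induction t with
  | var v => rfl
  | app m f ts ih => exact congrArg (𝔐.fn m f) (funext ih)

@[simp]
lemma Struc.updRel_rel_self (𝔐 : Struc σ M) (S : σ.Rel k) (Q : Set (Fin k → M))
    (xs : Fin k → M) : (𝔐.updRel S Q).rel k S xs ↔ xs ∈ Q := by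
  simp only [Struc.updRel]
  rfl

lemma Struc.updRel_rel_of_ne (𝔐 : Struc σ M) (S : σ.Rel k) (Q : Set (Fin k → M))
    {m : ℕ} {T : σ.Rel m} (hT : (⟨m, T⟩ : Σ n, σ.Rel n) ≠ ⟨k, S⟩) (xs : Fin m → M) :
    (𝔐.updRel S Q).rel m T xs ↔ 𝔐.rel m T xs := by
  simp only [Struc.updRel, dif_neg hT]

@[simp]
lemma Struc.withRels_rel_inl (𝔐 : Struc σ M) {a : Fin n → ℕ} (Q : ∀ i, Set (Fin (a i) → M))
    {m : ℕ} (T : σ.Rel m) (xs : Fin m → M) :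
    (𝔐.withRels Q).rel m (Sum.inl T) xs ↔ 𝔐.rel m T xs := Iff.rfl

@[simp]
lemma Struc.withRels_rel_inr (𝔐 : Struc σ M) (W : Fin n → Set (Fin k → M)) (i : Fin n)
    (xs : Fin k → M) :
    (𝔐.withRels W).rel k (Sum.inr ⟨i, rfl⟩) xs ↔ xs ∈ W i := Iff.rfl

namespace ReplEach

variable {φ : FOFml σ} {φ' : FOFml (σ.addRels n fun _ => k)}

lemma foSat_updRel_of_foSat_withRels {S : σ.Rel k} (h : ReplEach S φ φ') (𝔐 : Struc σ M)
    {W : Fin n → Set (Fin k → M)} {Q : Set (Fin k → M)} (hWQ : ∀ i, W i ⊆ Q) {s : ℕ → M}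
    (hs : FOSat (𝔐.withRels W) s φ') : FOSat (𝔐.updRel S Q) s φ := by
  induction h generalizing s with
  | eqC | neqC => simpa [FOSat] using hs
  | relS t i => simpa [FOSat] using hWQ i (by simpa [FOSat] using hs)
  | relO T t hT | nrelO T t hT => simpa [FOSat, 𝔐.updRel_rel_of_ne S Q hT] using hs
  | andC _ _ ih₁ ih₂ => exact hs.imp ih₁ ih₂
  | orC _ _ ih₁ ih₂ => exact hs.imp ih₁ ih₂
  | exC _ ih => exact hs.imp fun _ => ih
  | allC _ ih => exact fun m => ih (hs m)

lemma foSat_withRels_of_foSat_updRel {S : σ.Rel k} (h : ReplEach S φ φ') (𝔐 : Struc σ M)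
    {W : Fin n → Set (Fin k → M)} {Q : Set (Fin k → M)} (hQW : ∀ i, Q ⊆ W i) {s : ℕ → M}
    (hs : FOSat (𝔐.updRel S Q) s φ) : FOSat (𝔐.withRels W) s φ' := by
  induction h generalizing s with
  | eqC | neqC => simpa [FOSat] using hs
  | relS t i => simpa [FOSat] using hQW i (by simpa [FOSat] using hs)
  | relO T t hT | nrelO T t hT => simpa [FOSat, 𝔐.updRel_rel_of_ne S Q hT] using hs
  | andC _ _ ih₁ ih₂ => exact hs.imp ih₁ ih₂
  | orC _ _ ih₁ ih₂ => exact hs.imp ih₁ ih₂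
  | exC _ ih => exact hs.imp fun _ => ih
  | allC _ ih => exact fun m => ih (hs m)

end ReplEach

end

theorem split_positive_occurrences_general (k : ℕ) (D : DepOn k)
    (hdown : D.DownClosed)
    (σ : Sig) (S : σ.Rel k) (n : ℕ)
    (χ : FOFml σ) (χ' : FOFml (σ.addRels n fun _ => k))
    (hrepl : ReplEach S χ χ')
    (M : Type) (𝔐 : Struc σ M) (s : ℕ → M) :
    (∃ Q : Set (Fin k → M), D M Q ∧ FOSat (𝔐.updRel S Q) s χ) ↔
    (∃ Wr : Fin n → Set (Fin k → M), D M (⋃ i, Wr i) ∧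
      FOSat (𝔐.withRels Wr) s χ') := by
  constructor
  · rintro ⟨Q, hQ, hsat⟩
    exact ⟨fun _ => Q, hdown M Q _ hQ (Set.iUnion_subset fun _ => subset_rfl),
      hrepl.foSat_withRels_of_foSat_updRel 𝔐 (fun _ => subset_rfl) hsat⟩
  · rintro ⟨W, hW, hsat⟩
    exact ⟨⋃ i, W i, hW,
      hrepl.foSat_updRel_of_foSat_withRels 𝔐 (Set.subset_iUnion W) hsat⟩

/-- Splitting the positive occurrences of `S` among distinct new
symbols `W₁ … Wₙ`: there is a relation `S` with `⟨M, S⟩ ∈ D` satisfying `χ(S)` iff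
there are relations `W₁ … Wₙ` with `⟨M, ⋃ᵢ Wᵢ⟩ ∈ D` satisfying `χ'(W₁ … Wₙ)`. -/
theorem split_positive_occurrences (k : ℕ) (D : DepOn k)
    (hiso : D.IsoClosed) (hdown : D.DownClosed)
    (σ : Sig) (S : σ.Rel k) (n : ℕ)
    (χ : FOFml σ) (χ' : FOFml (σ.addRels n fun _ => k))
    (hpos : (⟨k, S⟩ : Σ m, σ.Rel m) ∉ χ.negRels)
    (hrepl : ReplEach S χ χ')
    (honce : ∀ i : Fin n,
      Fml.countRel (⟨k, Sum.inr ⟨i, rfl⟩⟩ :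
        Σ m, (σ.addRels n fun _ => k).Rel m) χ' = 1)
    (M : Type) (𝔐 : Struc σ M) (s : ℕ → M) :
    (∃ Q : Set (Fin k → M), D M Q ∧ FOSat (𝔐.updRel S Q) s χ) ↔
    (∃ Wr : Fin n → Set (Fin k → M), D M (⋃ i, Wr i) ∧
      FOSat (𝔐.withRels Wr) s χ') :=
  split_positive_occurrences_general k D hdown σ S n χ χ' hrepl M 𝔐 s
end

section
/- Let D be a dependency of arity k, let v₁,…,vₙ and w₁,…,wₙ be tuples of variables of length k, and let D_∪(v₁…vₙ; w₁…wₙ) be the FO(D) formula ∀p₁…pₙ∀q∃z₀z₁((⋁ᵢ q=pᵢ) ↪ (⋀_{i≤n}((⋀_{j<i} q≠pⱼ ∧ q=pᵢ) ↪ z₀z₁ = vᵢwᵢ) ∧ (z₀=z₁ ↪ D z₀))), where p₁…pₙ, q are new distinct variables and z₀, z₁ are tuples of new variables of length k. Then for all suitable structures M with at least two elements and all teams X: M ⊨_X D_∪(v₁…vₙ; w₁…wₙ) if and only if ⟨M, ⋃_{i=1}^n Wᵢ⟩ ∈ D, where Wᵢ = {s(vᵢ) : s ∈ X, s(vᵢ)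 = s(wᵢ)}. -/
/-! The universal quantifiers over `p₁ … pₙ q` copy every assignment of `X` with every
pattern of values of `p` and `q`; since `M` has two elements, for each `i` some copy has
`i` as the first index with `q = pᵢ`, and the `i`-th conjunct forces `z₀ z₁ = vᵢ wᵢ` on it.
So the tuples `z₀` with `z₀ = z₁` reaching the atom `D z₀` are exactly those of `⋃ Wᵢ`.
All guards are flat, so `θ ↪ φ` just evaluates `φ` on `X↾θ`. -/

namespace Fml
variable {σ : Sig} {ι : Type} {ar : ι → ℕ}

def IsQFFO : Fml σ ι ar → Prop
  | .eq _ _ | .neq _ _ | .rel _ _ _ | .nrel _ _ _ => True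
  | .and φ ψ | .or φ ψ => φ.IsQFFO ∧ ψ.IsQFFO
  | .dep _ _ | .ex _ _ | .all _ _ => False

/-- The negation `¬θ` of a quantifier-free first-order formula `θ`, in negation normal form;
the identity on quantifiers and dependency atoms. -/
def neg : Fml σ ι ar → Fml σ ι ar
  | .eq t u => .neq t u
  | .neq t u => .eq t u
  | .rel n R ts => .nrel n R ts
  | .nrel n R ts => .rel n R ts
  | .and φ ψ => .or φ.neg ψ.neg
  | .or φ ψ => .and φ.neg ψ.neg
  | φ => φ

/-- The selective implication `θ ↪ φ := ¬θ ∨ (θ ∧ φ)`. -/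
def selImp (θ φ : Fml σ ι ar) : Fml σ ι ar := θ.neg.or (θ.and φ)

theorem IsQFFO.neg {φ : Fml σ ι ar} (h : φ.IsQFFO) : φ.neg.IsQFFO := by
  induction φ with
  | and φ ψ ihφ ihψ | or φ ψ ihφ ihψ => exact ⟨ihφ h.1, ihψ h.2⟩
  | dep | ex | all => exact h.elim
  | _ => trivial

variable (𝒟 : ∀ i, DepOn (ar i)) {M : Type} (𝔐 : Struc σ M)

def IsFlat (φ : Fml σ ι ar) : Prop :=
  ∀ X : Team M, φ.TSat 𝒟 𝔐 X ↔ ∀ s ∈ X, φ.TSat 𝒟 𝔐 {s}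

variable {𝒟 𝔐}

theorem tsat_or_of_isFlat {φ ψ : Fml σ ι ar} (hφ : φ.IsFlat 𝒟 𝔐) (hψ : ψ.IsFlat 𝒟 𝔐)
    {X : Team M} :
    (φ.or ψ).TSat 𝒟 𝔐 X ↔ ∀ s ∈ X, φ.TSat 𝒟 𝔐 {s} ∨ ψ.TSat 𝒟 𝔐 {s} := by
  constructor
  · rintro ⟨Y, Z, rfl, hY, hZ⟩ s (hs | hs)
    exacts [Or.inl ((hφ Y).1 hY s hs), Or.inr ((hψ Z).1 hZ s hs)]
  · intro h
    refine ⟨{s ∈ X | φ.TSat 𝒟 𝔐 {s}}, {s ∈ X | ψ.TSat 𝒟 𝔐 {s}}, ?_,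
      (hφ _).2 fun s hs => hs.2, (hψ _).2 fun s hs => hs.2⟩
    ext s
    simp only [Set.mem_union, Set.mem_ofPred_eq, ← and_or_left, iff_self_and]
    exact h s

theorem tsat_or_singleton_of_isFlat {φ ψ : Fml σ ι ar} (hφ : φ.IsFlat 𝒟 𝔐)
    (hψ : ψ.IsFlat 𝒟 𝔐) {s : ℕ → M} :
    (φ.or ψ).TSat 𝒟 𝔐 {s} ↔ φ.TSat 𝒟 𝔐 {s} ∨ ψ.TSat 𝒟 𝔐 {s} := by
  simp only [tsat_or_of_isFlat hφ hψ, Set.mem_singleton_iff, forall_eq]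

theorem IsFlat.or {φ ψ : Fml σ ι ar} (hφ : φ.IsFlat 𝒟 𝔐) (hψ : ψ.IsFlat 𝒟 𝔐) :
    (φ.or ψ).IsFlat 𝒟 𝔐 := fun X => by
  simp only [tsat_or_of_isFlat hφ hψ, Set.mem_singleton_iff, forall_eq]

theorem IsFlat.and {φ ψ : Fml σ ι ar} (hφ : φ.IsFlat 𝒟 𝔐) (hψ : ψ.IsFlat 𝒟 𝔐) :
    (φ.and ψ).IsFlat 𝒟 𝔐 := fun X => by
  simp only [TSat, hφ X, hψ X, ← forall₂_and]

theorem IsQFFO.isFlat {φ : Fml σ ι ar} (h : φ.IsQFFO) : φ.IsFlat 𝒟 𝔐 := by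
  induction φ with
  | and φ ψ ihφ ihψ => exact (ihφ h.1).and (ihψ h.2)
  | or φ ψ ihφ ihψ => exact (ihφ h.1).or (ihψ h.2)
  | dep | ex | all => exact h.elim
  | _ => intro X; simp [TSat]

theorem IsQFFO.tsat_neg_singleton {φ : Fml σ ι ar} (h : φ.IsQFFO) {s : ℕ → M} :
    φ.neg.TSat 𝒟 𝔐 {s} ↔ ¬ φ.TSat 𝒟 𝔐 {s} := by
  induction φ with
  | and φ ψ ihφ ihψ =>
    rw [Fml.neg, tsat_or_singleton_of_isFlat h.1.neg.isFlat h.2.neg.isFlat, ihφ h.1, ihψ h.2]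
    exact not_and_or.symm
  | or φ ψ ihφ ihψ =>
    rw [tsat_or_singleton_of_isFlat h.1.isFlat h.2.isFlat]
    simp [Fml.neg, TSat, ihφ h.1, ihψ h.2]
  | dep | ex | all => exact h.elim
  | _ => simp [Fml.neg, TSat]

theorem tsat_selImp {θ : Fml σ ι ar} (hθ : θ.IsQFFO) (φ : Fml σ ι ar) {X : Team M} :
    (θ.selImp φ).TSat 𝒟 𝔐 X ↔ φ.TSat 𝒟 𝔐 {s ∈ X | θ.TSat 𝒟 𝔐 {s}} := by
  constructor
  · rintro ⟨Y, Z, rfl, hY, hZθ, hZφ⟩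
    convert hZφ using 1
    ext s
    refine ⟨fun ⟨hs, hsθ⟩ => hs.resolve_left fun hsY => ?_, fun hs => ⟨.inr hs, ?_⟩⟩
    · exact (hθ.tsat_neg_singleton).1 ((hθ.neg.isFlat Y).1 hY s hsY) hsθ
    · exact (hθ.isFlat Z).1 hZθ s hs
  · intro h
    refine ⟨{s ∈ X | ¬ θ.TSat 𝒟 𝔐 {s}}, {s ∈ X | θ.TSat 𝒟 𝔐 {s}}, ?_,
      (hθ.neg.isFlat _).2 fun s hs => hθ.tsat_neg_singleton.2 hs.2,
      (hθ.isFlat _).2 fun s hs => hs.2, h⟩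
    ext s
    simp only [Set.mem_union, Set.mem_ofPred_eq, ← and_or_left, iff_self_and]
    exact fun _ => (em' _)

end Fml

section Connectives
variable {σ : Sig} {ι : Type} {ar : ι → ℕ} {𝒟 : ∀ i, DepOn (ar i)} {M : Type}
  {𝔐 : Struc σ M}

@[simp]
theorem tsat_veq_singleton {a b : ℕ} {s : ℕ → M} :
    (veq a b : Fml σ ι ar).TSat 𝒟 𝔐 {s} ↔ s a = s b := by
  simp [veq, Fml.TSat, Tm.eval]

@[simp]
theorem tsat_vne_singleton {a b : ℕ} {s : ℕ → M} :
    (vne a b : Fml σ ι ar).TSat 𝒟 𝔐 {s} ↔ s a ≠ s b := by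
  simp [vne, Fml.TSat, Tm.eval]

@[simp]
theorem isQFFO_veq {a b : ℕ} : (veq a b : Fml σ ι ar).IsQFFO := trivial

@[simp]
theorem isQFFO_vne {a b : ℕ} : (vne a b : Fml σ ι ar).IsQFFO := trivial

@[simp]
theorem neg_veq {a b : ℕ} : (veq a b : Fml σ ι ar).neg = vne a b := rfl

@[simp]
theorem neg_vne {a b : ℕ} : (vne a b : Fml σ ι ar).neg = veq a b := rfl

theorem bigAndL_cons (φ : Fml σ ι ar) (l : List (Fml σ ι ar)) :
    bigAndL (φ :: l) = φ.and (bigAndL l) := rfl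

theorem bigOrL_cons (φ : Fml σ ι ar) (l : List (Fml σ ι ar)) :
    bigOrL (φ :: l) = φ.or (bigOrL l) := rfl

theorem neg_bigAndL (l : List (Fml σ ι ar)) : (bigAndL l).neg = bigOrL (l.map Fml.neg) := by
  induction l with
  | nil => rfl
  | cons φ l ih => exact congrArg (Fml.or φ.neg) ih

theorem neg_bigOrL (l : List (Fml σ ι ar)) : (bigOrL l).neg = bigAndL (l.map Fml.neg) := by
  induction l with
  | nil => rfl
  | cons φ l ih => exact congrArg (Fml.and φ.neg) ih

theorem isQFFO_bigAndL {l : List (Fml σ ι ar)} (h : ∀ φ ∈ l, φ.IsQFFO) :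
    (bigAndL l).IsQFFO := by
  induction l with
  | nil => trivial
  | cons φ l ih => exact ⟨h φ (by simp), ih fun ψ hψ => h ψ (by simp [hψ])⟩

theorem isQFFO_bigOrL {l : List (Fml σ ι ar)} (h : ∀ φ ∈ l, φ.IsQFFO) :
    (bigOrL l).IsQFFO := by
  induction l with
  | nil => trivial
  | cons φ l ih => exact ⟨h φ (by simp), ih fun ψ hψ => h ψ (by simp [hψ])⟩

theorem tsat_bigAndL {l : List (Fml σ ι ar)} {X : Team M} :
    (bigAndL l).TSat 𝒟 𝔐 X ↔ ∀ φ ∈ l, φ.TSat 𝒟 𝔐 X := by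
  induction l with
  | nil => exact iff_of_true (fun _ _ => rfl) (by simp)
  | cons φ l ih => rw [bigAndL_cons, List.forall_mem_cons, ← ih]; rfl

theorem tsat_bigOrL_singleton {l : List (Fml σ ι ar)} (h : ∀ φ ∈ l, φ.IsQFFO) {s : ℕ → M} :
    (bigOrL l).TSat 𝒟 𝔐 {s} ↔ ∃ φ ∈ l, φ.TSat 𝒟 𝔐 {s} := by
  induction l with
  | nil => simp [bigOrL, Fml.falsum, Fml.TSat]
  | cons φ l ih =>
    have hl : ∀ ψ ∈ l, ψ.IsQFFO := fun ψ hψ => h ψ (by simp [hψ])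
    rw [bigOrL_cons, Fml.tsat_or_singleton_of_isFlat (h φ (by simp)).isFlat
      (isQFFO_bigOrL hl).isFlat, ih hl]
    simp

end Connectives

section Quantifiers
variable {σ : Sig} {ι : Type} {ar : ι → ℕ} {𝒟 : ∀ i, DepOn (ar i)} {M : Type}
  {𝔐 : Struc σ M}

def AgreeOff (vs : List ℕ) (s s₀ : ℕ → M) : Prop :=
  ∀ x, x ∉ vs → s x = s₀ x

theorem agreeOff_nil {s s₀ : ℕ → M} : AgreeOff [] s s₀ ↔ s = s₀ :=
  ⟨fun h => funext fun x => h x List.not_mem_nil, fun h x _ => congrFun h x⟩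

theorem agreeOff_cons {v : ℕ} {vs : List ℕ} {s s₀ : ℕ → M} :
    AgreeOff (v :: vs) s s₀ ↔ ∃ m, AgreeOff vs s (Function.update s₀ v m) := by
  constructor
  · intro h
    refine ⟨s v, fun x hx => ?_⟩
    by_cases hxv : x = v
    · subst hxv; simp
    · rw [Function.update_of_ne hxv]
      exact h x (by simp [hxv, hx])
  · rintro ⟨m, h⟩ x hx
    rw [List.mem_cons, not_or] at hx
    rw [h x hx.2, Function.update_of_ne hx.1]

def teamDupList (X : Team M) (vs : List ℕ) : Team M :=
  {s | ∃ s₀ ∈ X, AgreeOff vs s s₀}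

def TeamAgreeOff (vs : List ℕ) (Z X : Team M) : Prop :=
  (∀ s ∈ Z, ∃ s₀ ∈ X, AgreeOff vs s s₀) ∧ ∀ s₀ ∈ X, ∃ s ∈ Z, AgreeOff vs s s₀

theorem tsat_alls {vs : List ℕ} {φ : Fml σ ι ar} {X : Team M} :
    (alls vs φ).TSat 𝒟 𝔐 X ↔ φ.TSat 𝒟 𝔐 (teamDupList X vs) := by
  induction vs generalizing X with
  | nil =>
    have hX : teamDupList X [] = X := by ext s; simp [teamDupList, agreeOff_nil]
    rw [hX]; rfl
  | cons v vs ih =>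
    have hX : teamDupList (teamDup X v) vs = teamDupList X (v :: vs) := by
      ext s
      simp only [teamDupList, teamDup, teamSupp, agreeOff_cons]
      aesop
    exact ih.trans (by rw [hX])

theorem tsat_exs {vs : List ℕ} {φ : Fml σ ι ar} {X : Team M} :
    (exs vs φ).TSat 𝒟 𝔐 X ↔ ∃ Z, TeamAgreeOff vs Z X ∧ φ.TSat 𝒟 𝔐 Z := by
  induction vs generalizing X with
  | nil =>
    have hZ : ∀ Z : Team M, TeamAgreeOff [] Z X ↔ Z = X := fun Z => by
      simp only [TeamAgreeOff, agreeOff_nil, exists_eq_right, exists_eq_right']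
      exact ⟨fun h => Set.Subset.antisymm h.1 h.2, fun h => ⟨h.le, h.ge⟩⟩
    simp only [hZ, exists_eq_left]
    rfl
  | cons v vs ih =>
    show (∃ H, (∀ s ∈ X, (H s).Nonempty) ∧ (exs vs φ).TSat 𝒟 𝔐 (teamSupp X H v)) ↔ _
    simp only [ih]
    constructor
    · rintro ⟨H, hH, Z, ⟨hZX, hXZ⟩, hZ⟩
      refine ⟨Z, ⟨fun s hs => ?_, fun s₀ hs₀ => ?_⟩, hZ⟩
      · obtain ⟨_, ⟨s₀, hs₀, m, -, rfl⟩, h⟩ := hZX s hs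
        exact ⟨s₀, hs₀, agreeOff_cons.2 ⟨m, h⟩⟩
      · obtain ⟨m, hm⟩ := hH s₀ hs₀
        obtain ⟨s, hs, h⟩ := hXZ _ ⟨s₀, hs₀, m, hm, rfl⟩
        exact ⟨s, hs, agreeOff_cons.2 ⟨m, h⟩⟩
    · rintro ⟨Z, ⟨hZX, hXZ⟩, hZ⟩
      refine ⟨fun s₀ => {m | ∃ s ∈ Z, AgreeOff vs s (Function.update s₀ v m)},
        fun s₀ hs₀ => ?_, Z, ⟨fun s hs => ?_, ?_⟩, hZ⟩
      · obtain ⟨s, hs, h⟩ := hXZ s₀ hs₀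
        obtain ⟨m, hm⟩ := agreeOff_cons.1 h
        exact ⟨m, s, hs, hm⟩
      · obtain ⟨s₀, hs₀, h⟩ := hZX s hs
        obtain ⟨m, hm⟩ := agreeOff_cons.1 h
        exact ⟨_, ⟨s₀, hs₀, m, ⟨s, hs, hm⟩, rfl⟩, hm⟩
      · rintro _ ⟨s₀, hs₀, m, ⟨s, hs, hm⟩, rfl⟩
        exact ⟨s, hs, hm⟩

end Quantifiers

section DepUnion
variable {σ : Sig} {ι : Type} {ar : ι → ℕ} {𝒟 : ∀ i, DepOn (ar i)} {M : Type}
  {𝔐 : Struc σ M} {n k : ℕ}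

def duUniv (p : Fin n → ℕ) (q : ℕ) : List ℕ :=
  (List.finRange n).map p ++ [q]

def duExist (z₀ z₁ : Fin k → ℕ) : List ℕ :=
  (List.finRange k).map z₀ ++ (List.finRange k).map z₁

theorem duFresh_eq (p : Fin n → ℕ) (q : ℕ) (z₀ z₁ : Fin k → ℕ) :
    duFresh n k p q z₀ z₁ = duUniv p q ++ duExist z₀ z₁ := by
  simp [duFresh, duUniv, duExist]

def FirstHit (p : Fin n → ℕ) (q : ℕ) (s : ℕ → M) (i : Fin n) : Prop :=
  s q = s (p i) ∧ ∀ j < i, s q ≠ s (p j)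

def hitF (p : Fin n → ℕ) (q : ℕ) : Fml σ ι ar :=
  bigOrL ((List.finRange n).map fun i => veq q (p i))

def firstHitF (p : Fin n → ℕ) (q : ℕ) (i : Fin n) : Fml σ ι ar :=
  bigAndL ((((List.finRange n).filter fun j => j < i).map fun j => vne q (p j)) ++
    [veq q (p i)])

def tupleEqF (x y : Fin k → ℕ) : Fml σ ι ar :=
  bigAndL ((List.finRange k).map fun t => veq (x t) (y t))

def pairEqF (z₀ z₁ x y : Fin k → ℕ) : Fml σ ι ar :=
  bigAndL (((List.finRange k).map fun t => veq (z₀ t) (x t)) ++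
    ((List.finRange k).map fun t => veq (z₁ t) (y t)))

theorem depUnion_eq_selImp (i₀ : ι) (v w : Fin n → Fin (ar i₀) → ℕ) (p : Fin n → ℕ)
    (q : ℕ) (z₀ z₁ : Fin (ar i₀) → ℕ) :
    (depUnion i₀ n v w p q z₀ z₁ : Fml σ ι ar) =
      alls (duUniv p q) (exs (duExist z₀ z₁) ((hitF p q).selImp
        ((bigAndL ((List.finRange n).map fun i =>
            (firstHitF p q i).selImp (pairEqF z₀ z₁ (v i) (w i)))).and
          ((tupleEqF z₀ z₁).selImp (.dep i₀ fun t => .var (z₀ t)))))) := by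
  simp [depUnion, duUniv, duExist, hitF, firstHitF, tupleEqF, pairEqF, Fml.selImp,
    neg_bigAndL, neg_bigOrL, Function.comp_def]

theorem isQFFO_hitF (p : Fin n → ℕ) (q : ℕ) : (hitF p q : Fml σ ι ar).IsQFFO :=
  isQFFO_bigOrL (by simp)

theorem isQFFO_firstHitF (p : Fin n → ℕ) (q : ℕ) (i : Fin n) :
    (firstHitF p q i : Fml σ ι ar).IsQFFO :=
  isQFFO_bigAndL (by simp only [List.forall_mem_append, List.forall_mem_map]; simp)

theorem isQFFO_tupleEqF (x y : Fin k → ℕ) : (tupleEqF x y : Fml σ ι ar).IsQFFO :=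
  isQFFO_bigAndL (by simp)

theorem tsat_hitF_singleton {p : Fin n → ℕ} {q : ℕ} {s : ℕ → M} :
    (hitF p q : Fml σ ι ar).TSat 𝒟 𝔐 {s} ↔ ∃ i, s q = s (p i) := by
  simp [hitF, tsat_bigOrL_singleton]

theorem tsat_firstHitF_singleton {p : Fin n → ℕ} {q : ℕ} {i : Fin n} {s : ℕ → M} :
    (firstHitF p q i : Fml σ ι ar).TSat 𝒟 𝔐 {s} ↔ FirstHit p q s i := by
  simp only [firstHitF, tsat_bigAndL, List.forall_mem_append, List.forall_mem_map,
    List.mem_filter, List.forall_mem_singleton]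
  simp [FirstHit, and_comm]

theorem tsat_tupleEqF_singleton {x y : Fin k → ℕ} {s : ℕ → M} :
    (tupleEqF x y : Fml σ ι ar).TSat 𝒟 𝔐 {s} ↔ s ∘ x = s ∘ y := by
  simp [tupleEqF, tsat_bigAndL, funext_iff]

theorem tsat_pairEqF {z₀ z₁ x y : Fin k → ℕ} {X : Team M} :
    (pairEqF z₀ z₁ x y : Fml σ ι ar).TSat 𝒟 𝔐 X ↔
      ∀ s ∈ X, s ∘ z₀ = s ∘ x ∧ s ∘ z₁ = s ∘ y := by
  have hqf : (pairEqF z₀ z₁ x y : Fml σ ι ar).IsQFFO :=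
    isQFFO_bigAndL (by simp only [List.forall_mem_append, List.forall_mem_map]; simp)
  rw [hqf.isFlat]
  simp only [pairEqF, tsat_bigAndL, List.forall_mem_append, List.forall_mem_map]
  simp [funext_iff]

theorem teamVals_var (X : Team M) (z : Fin k → ℕ) :
    teamVals 𝔐 X (fun t => Tm.var (z t)) = (· ∘ z) '' X := by
  ext xs
  simp [teamVals, Tm.eval, eq_comm, Function.comp_def]

theorem tsat_depUnion {i₀ : ι} {v w : Fin n → Fin (ar i₀) → ℕ} {p : Fin n → ℕ} {q : ℕ}
    {z₀ z₁ : Fin (ar i₀) → ℕ} {X : Team M} :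
    (depUnion i₀ n v w p q z₀ z₁ : Fml σ ι ar).TSat 𝒟 𝔐 X ↔
      ∃ Z, TeamAgreeOff (duExist z₀ z₁) Z (teamDupList X (duUniv p q)) ∧
        (∀ s ∈ Z, ∀ i, FirstHit p q s i → s ∘ z₀ = s ∘ v i ∧ s ∘ z₁ = s ∘ w i) ∧
        𝒟 i₀ M ((· ∘ z₀) '' {s ∈ Z | (∃ i, s q = s (p i)) ∧ s ∘ z₀ = s ∘ z₁}) := by
  rw [depUnion_eq_selImp, tsat_alls, tsat_exs]
  refine exists_congr fun Z => and_congr_right' ?_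
  simp only [Fml.tsat_selImp (isQFFO_hitF p q), Fml.TSat, tsat_bigAndL, List.forall_mem_map,
    Fml.tsat_selImp (isQFFO_firstHitF p q _), Fml.tsat_selImp (isQFFO_tupleEqF z₀ z₁),
    tsat_pairEqF, teamVals_var, tsat_hitF_singleton, tsat_firstHitF_singleton,
    tsat_tupleEqF_singleton, List.mem_finRange, true_imp_iff, Set.mem_ofPred_eq]
  refine and_congr ⟨fun h s hs i hi => h i s ⟨⟨hs, i, hi.1⟩, hi⟩,
    fun h i s ⟨⟨hs, _⟩, hi⟩ => h s hs i hi⟩ (by simp only [and_assoc])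

end DepUnion

section Witnesses
variable {M : Type} {n k : ℕ} {p : Fin n → ℕ} {q : ℕ}

theorem AgreeOff.trans {l₁ l₂ : List ℕ} {s s₁ s₂ : ℕ → M} (h₁ : AgreeOff l₁ s s₁)
    (h₂ : AgreeOff l₂ s₁ s₂) : AgreeOff (l₂ ++ l₁) s s₂ := fun x hx => by
  rw [List.mem_append, not_or] at hx
  exact (h₁ x hx.2).trans (h₂ x hx.1)

theorem AgreeOff.comp_eq {vs : List ℕ} {s s₀ : ℕ → M} (h : AgreeOff vs s s₀) {y : Fin k → ℕ}
    (hy : ∀ t, y t ∉ vs) : s ∘ y = s₀ ∘ y :=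
  funext fun t => h _ (hy t)

theorem nodup_duUniv : (duUniv p q).Nodup ↔ Function.Injective p ∧ ∀ i, p i ≠ q := by
  simp [duUniv, List.nodup_append, ← List.ofFn_eq_map, List.nodup_ofFn]

theorem injective_sumElim_of_nodup_duExist {z₀ z₁ : Fin k → ℕ} (h : (duExist z₀ z₁).Nodup) :
    Function.Injective (Sum.elim z₀ z₁) := by
  rw [duExist, List.nodup_append, ← List.ofFn_eq_map, ← List.ofFn_eq_map, List.nodup_ofFn,
    List.nodup_ofFn] at h
  exact h.1.sumElim h.2.1 (by simpa using h.2.2)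

theorem exists_firstHit {s : ℕ → M} (h : ∃ i, s q = s (p i)) : ∃ i, FirstHit p q s i := by
  obtain ⟨i, hi, hmin⟩ := wellFounded_lt.has_min {i | s q = s (p i)} h
  exact ⟨i, hi, fun j hj hj' => hmin j hj' hj⟩

theorem FirstHit.unique {s : ℕ → M} {i i' : Fin n} (h : FirstHit p q s i)
    (h' : FirstHit p q s i') : i = i' := by
  rcases lt_trichotomy i i' with hlt | heq | hgt
  · exact absurd h.1 (h'.2 i hlt)
  · exact heq
  · exact absurd h'.1 (h.2 i' hgt)

theorem firstHit_congr {s s' : ℕ → M} (h : ∀ x ∈ duUniv p q, s x = s' x) {i : Fin n} :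
    FirstHit p q s i ↔ FirstHit p q s' i := by
  have hq : s q = s' q := h q (by simp [duUniv])
  have hp : ∀ j, s (p j) = s' (p j) := fun j => h _ (by simp [duUniv])
  simp only [FirstHit, hq, hp]

/-- Setting `q := a`, `pᵢ := a` and `pⱼ := b` for `j ≠ i` makes `i` the first hit. -/
theorem exists_agreeOff_firstHit {a b : M} (hab : a ≠ b) (hp : Function.Injective p)
    (hq : ∀ i, p i ≠ q) (s₀ : ℕ → M) (i : Fin n) :
    ∃ s, AgreeOff (duUniv p q) s s₀ ∧ FirstHit p q s i := by
  set s := Function.update (Function.extend p (fun j => if j = i then a else b) s₀) q a with hs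
  have hsq : s q = a := Function.update_self ..
  have hsp : ∀ j, s (p j) = if j = i then a else b := fun j => by
    rw [hs, Function.update_of_ne (hq j), hp.extend_apply]
  refine ⟨s, fun x hx => ?_, ?_⟩
  · simp only [duUniv, List.mem_append, List.mem_map, List.mem_finRange, true_and,
      List.mem_singleton, not_or] at hx
    rw [hs, Function.update_of_ne hx.2, Function.extend_apply' _ _ _ hx.1]
  · simpa [FirstHit, hsq, hsp, hab] using fun j (hj : j < i) => hj.ne

end Witnesses

section Core
variable {M : Type} {n k : ℕ} {v w : Fin n → Fin k → ℕ} {p : Fin n → ℕ} {q : ℕ}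
  {z₀ z₁ : Fin k → ℕ}

theorem mem_pairRel {X : Team M} {x y : Fin k → ℕ} {xs : Fin k → M} :
    xs ∈ pairRel X x y ↔ ∃ s ∈ X, s ∘ x = xs ∧ s ∘ x = s ∘ y := by
  simp [pairRel, funext_iff, eq_comm]

theorem exists_agreeOff_match (hz : Function.Injective (Sum.elim z₀ z₁))
    (hUE : ∀ x ∈ duUniv p q, x ∉ duExist z₀ z₁) (hv : ∀ i t, v i t ∉ duExist z₀ z₁)
    (hw : ∀ i t, w i t ∉ duExist z₀ z₁) (sY : ℕ → M) :
    ∃ s, AgreeOff (duExist z₀ z₁) s sY ∧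
      ∀ i, FirstHit p q s i → s ∘ z₀ = s ∘ v i ∧ s ∘ z₁ = s ∘ w i := by
  by_cases h : ∃ i, FirstHit p q sY i
  · obtain ⟨i, hi⟩ := h
    set s := Function.extend (Sum.elim z₀ z₁) (Sum.elim (sY ∘ v i) (sY ∘ w i)) sY with hs
    have hagree : AgreeOff (duExist z₀ z₁) s sY := fun x hx =>
      Function.extend_apply' _ _ _ fun ⟨t, ht⟩ => hx <| by
        rcases t with t | t <;> simp [duExist, ← ht]
    refine ⟨s, hagree, fun i' hi' => ?_⟩
    obtain rfl : i' = i := ((firstHit_congr fun x hx => hagree x (hUE x hx)).1 hi').unique hi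
    rw [hagree.comp_eq (hv i'), hagree.comp_eq (hw i')]
    exact ⟨funext fun t => hz.extend_apply _ _ (.inl t),
      funext fun t => hz.extend_apply _ _ (.inr t)⟩
  · exact ⟨sY, fun _ _ => rfl, fun i hi => (h ⟨i, hi⟩).elim⟩

theorem exists_teamAgreeOff_match (hz : Function.Injective (Sum.elim z₀ z₁))
    (hUE : ∀ x ∈ duUniv p q, x ∉ duExist z₀ z₁) (hv : ∀ i t, v i t ∉ duExist z₀ z₁)
    (hw : ∀ i t, w i t ∉ duExist z₀ z₁) (Y : Team M) :
    ∃ Z, TeamAgreeOff (duExist z₀ z₁) Z Y ∧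
      ∀ s ∈ Z, ∀ i, FirstHit p q s i → s ∘ z₀ = s ∘ v i ∧ s ∘ z₁ = s ∘ w i := by
  choose f hfY hf using exists_agreeOff_match (M := M) hz hUE hv hw
  exact ⟨f '' Y, ⟨by rintro _ ⟨sY, hsY, rfl⟩; exact ⟨sY, hsY, hfY sY⟩,
    fun sY hsY => ⟨f sY, ⟨sY, hsY, rfl⟩, hfY sY⟩⟩, by rintro _ ⟨sY, -, rfl⟩; exact hf sY⟩

section
variable {X Z : Team M}
  (hv : ∀ i t, v i t ∉ duUniv p q ++ duExist z₀ z₁)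
  (hw : ∀ i t, w i t ∉ duUniv p q ++ duExist z₀ z₁)
  (hZ : TeamAgreeOff (duExist z₀ z₁) Z (teamDupList X (duUniv p q)))
  (hmatch : ∀ s ∈ Z, ∀ i, FirstHit p q s i → s ∘ z₀ = s ∘ v i ∧ s ∘ z₁ = s ∘ w i)
include hv hw hZ hmatch

theorem image_hits_subset_iUnion_pairRel :
    (· ∘ z₀) '' {s ∈ Z | (∃ i, s q = s (p i)) ∧ s ∘ z₀ = s ∘ z₁} ⊆
      ⋃ i, pairRel X (v i) (w i) := by
  rintro _ ⟨s, ⟨hsZ, hhit, hz⟩, rfl⟩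
  obtain ⟨sY, ⟨s₀, hs₀, hY⟩, hsY⟩ := hZ.1 s hsZ
  have hs := hsY.trans hY
  obtain ⟨i, hi⟩ := exists_firstHit hhit
  obtain ⟨h₀, h₁⟩ := hmatch s hsZ i hi
  refine Set.mem_iUnion.2 ⟨i, mem_pairRel.2 ⟨s₀, hs₀, ?_, ?_⟩⟩
  · exact (h₀.trans (hs.comp_eq (hv i))).symm
  · rw [← hs.comp_eq (hv i), ← hs.comp_eq (hw i), ← h₀, ← h₁, hz]

theorem iUnion_pairRel_subset_image_hits {a b : M} (hab : a ≠ b) (hp : Function.Injective p)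
    (hq : ∀ i, p i ≠ q) (hUE : ∀ x ∈ duUniv p q, x ∉ duExist z₀ z₁) :
    ⋃ i, pairRel X (v i) (w i) ⊆
      (· ∘ z₀) '' {s ∈ Z | (∃ i, s q = s (p i)) ∧ s ∘ z₀ = s ∘ z₁} := by
  intro xs hxs
  obtain ⟨i, hxs⟩ := Set.mem_iUnion.1 hxs
  obtain ⟨s₀, hs₀, rfl, hvw⟩ := mem_pairRel.1 hxs
  obtain ⟨sY, hsY, hiY⟩ := exists_agreeOff_firstHit hab hp hq s₀ i
  obtain ⟨s, hsZ, hs⟩ := hZ.2 sY ⟨s₀, hs₀, hsY⟩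
  have hi : FirstHit p q s i := (firstHit_congr fun x hx => hs x (hUE x hx)).2 hiY
  have hagree := hs.trans hsY
  obtain ⟨h₀, h₁⟩ := hmatch s hsZ i hi
  refine ⟨s, ⟨hsZ, ⟨i, hi.1⟩, ?_⟩, h₀.trans (hagree.comp_eq (hv i))⟩
  rw [h₀, h₁, hagree.comp_eq (hv i), hagree.comp_eq (hw i), hvw]

theorem image_hits_eq_iUnion_pairRel {a b : M} (hab : a ≠ b) (hp : Function.Injective p)
    (hq : ∀ i, p i ≠ q) (hUE : ∀ x ∈ duUniv p q, x ∉ duExist z₀ z₁) :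
    (· ∘ z₀) '' {s ∈ Z | (∃ i, s q = s (p i)) ∧ s ∘ z₀ = s ∘ z₁} =
      ⋃ i, pairRel X (v i) (w i) :=
  (image_hits_subset_iUnion_pairRel hv hw hZ hmatch).antisymm
    (iUnion_pairRel_subset_image_hits hv hw hZ hmatch hab hp hq hUE)

end

end Core

theorem depUnion_semantics_general (ι : Type) (ar : ι → ℕ) (𝒟 : ∀ i, DepOn (ar i))
    (i₀ : ι)
    (σ : Sig) (n : ℕ) (v w : Fin n → Fin (ar i₀) → ℕ)
    (p : Fin n → ℕ) (q : ℕ) (z₀ z₁ : Fin (ar i₀) → ℕ)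
    (hnodup : (duFresh n (ar i₀) p q z₀ z₁).Nodup)
    (hfresh : ∀ x ∈ duFresh n (ar i₀) p q z₀ z₁,
      ∀ (i : Fin n) (j : Fin (ar i₀)), x ≠ v i j ∧ x ≠ w i j)
    (M : Type) (𝔐 : Struc σ M) (X : Team M) (htwo : ∃ a b : M, a ≠ b) :
    Fml.TSat 𝒟 𝔐 (depUnion i₀ n v w p q z₀ z₁) X ↔
      𝒟 i₀ M (⋃ i, pairRel X (v i) (w i)) := by
  obtain ⟨a, b, hab⟩ := htwo
  rw [duFresh_eq] at hnodup hfresh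
  obtain ⟨hU, hE, hUE⟩ := List.nodup_append.1 hnodup
  obtain ⟨hp, hq⟩ := nodup_duUniv.1 hU
  have hUE' : ∀ x ∈ duUniv p q, x ∉ duExist z₀ z₁ := fun x hx hx' => hUE x hx x hx' rfl
  have hv : ∀ i t, v i t ∉ duUniv p q ++ duExist z₀ z₁ := fun i t h => (hfresh _ h i t).1 rfl
  have hw : ∀ i t, w i t ∉ duUniv p q ++ duExist z₀ z₁ := fun i t h => (hfresh _ h i t).2 rfl
  rw [tsat_depUnion]
  constructor
  · rintro ⟨Z, hZ, hmatch, hD⟩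
    rwa [image_hits_eq_iUnion_pairRel hv hw hZ hmatch hab hp hq hUE'] at hD
  · intro hD
    obtain ⟨Z, hZ, hmatch⟩ := exists_teamAgreeOff_match (injective_sumElim_of_nodup_duExist hE)
      hUE' (fun i t h => hv i t (List.mem_append_right _ h))
      (fun i t h => hw i t (List.mem_append_right _ h)) (teamDupList X (duUniv p q))
    exact ⟨Z, hZ, hmatch, by rwa [image_hits_eq_iUnion_pairRel hv hw hZ hmatch hab hp hq hUE']⟩

/-- Semantics of the formula `D_∪(v₁ … vₙ; w₁ … wₙ)`: in a structure
with at least two elements, a team `X` satisfies it iff the union of the relations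
`Wᵢ = {s(vᵢ) : s ∈ X, s(vᵢ) = s(wᵢ)}` satisfies the dependency. -/
theorem depUnion_semantics (ι : Type) (ar : ι → ℕ) (𝒟 : ∀ i, DepOn (ar i))
    (hiso : ∀ i, (𝒟 i).IsoClosed) (i₀ : ι)
    (σ : Sig) (n : ℕ) (v w : Fin n → Fin (ar i₀) → ℕ)
    (p : Fin n → ℕ) (q : ℕ) (z₀ z₁ : Fin (ar i₀) → ℕ)
    (hnodup : (duFresh n (ar i₀) p q z₀ z₁).Nodup)
    (hfresh : ∀ x ∈ duFresh n (ar i₀) p q z₀ z₁,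
      ∀ (i : Fin n) (j : Fin (ar i₀)), x ≠ v i j ∧ x ≠ w i j)
    (M : Type) (𝔐 : Struc σ M) (X : Team M) (htwo : ∃ a b : M, a ≠ b) :
    Fml.TSat 𝒟 𝔐 (depUnion i₀ n v w p q z₀ z₁) X ↔
      𝒟 i₀ M (⋃ i, pairRel X (v i) (w i)) :=
  depUnion_semantics_general ι ar 𝒟 i₀ σ n v w p q z₀ z₁ hnodup hfresh M 𝔐 X htwo
end
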